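/- arXiv:0908.3413 — 2 statements merged into one kernel-verified Lean document; each statement's English description precedes it below -/
import Mathlib

section
/- Jeffreys' prior is the second-order expansion matching prior for independent diagonal Fisher information (Example 1). Suppose the parametric family on Θ ⊆ ℝ^d has Fisher information I(θ) = diag(I₁₁(θ₁),…,I_dd(θ_d)), where each I_jj is positive and continuously differentiable and depends only on θ_j; suppose ℰ_i(θ) = 0 for every multi-index i with |i| = 3 that is not of the form 3e_j, and ℰ_{3e_j}(θ) = −dI_jj(θ_j)/dθ_j for each j (as follows from exchanging expectation and differentiation). Take a = (2,…,2), so {σ(a)}(θ) = I(θ)⁻¹. Then Ψ_{3e_j}(θ) = 3 I_jj(θ_j)⁻² e_j, the matching vector satisfies −{σ(a)}(θ)⁻¹ Σ_{|i|=3} (ℰ_i(θ)/i!) Ψ_i(θ) = ( (1/2)(dI₁₁/dθ₁)/I₁₁(θ₁), …, (1/2)(dI_dd/dθ_d)/I_dd(θ_d) ), and the second-order expansion matching equation ∇ log π(θ) = −{σ(a)}(θ)⁻¹ Σ_{|i|=3} (ℰ_i(θ)/i!) Ψ_i(θ) is solved (up to a multiplicative constant) by Jeffreys' prior π(θ) =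 Π_{j=1}^d I_jj(θ_j)^{1/2} = |I(θ)|^{1/2}. -/
open MeasureTheory Filter Matrix
open scoped BigOperators ENNReal NNReal Topology

namespace Paper

/-- `|i|`, the degree of a multi-index. -/
def msum {d : ℕ} (i : Fin d → ℕ) : ℕ := ∑ j, i j

/-- `i!` for a multi-index. -/
def mfact {d : ℕ} (i : Fin d → ℕ) : ℕ := ∏ j, Nat.factorial (i j)

/-- `⟨H^i⟩ = ∏ j (H j)^(i j)`. -/
def mpow {d : ℕ} (H : Fin d → ℝ) (i : Fin d → ℕ) : ℝ := ∏ j, H j ^ i j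

/-- the finite set of multi-indices with `|i| = t`. -/
def mIdx (d t : ℕ) : Finset (Fin d → ℕ) :=
  (Fintype.piFinset fun _ : Fin d => Finset.range (t + 1)).filter fun i => msum i = t

/-- the index set `(r, s, l, i)`: tuples `(i_r, …, i_s)` of multi-indices with
`Σ v • i_v = l` and `Σ i_v = i`, encoded as functions on `Fin (s+1)` vanishing below `r`. -/
def tset (d r s : ℕ) (l i : Fin d → ℕ) : Finset (Fin (s + 1) → Fin d → ℕ) :=
  (Fintype.piFinset fun _ : Fin (s + 1) =>
      Fintype.piFinset fun j : Fin d => Finset.range (i j + 1)).filter fun T =>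
    (∀ v : Fin (s + 1), (v : ℕ) < r → T v = 0) ∧
      (∑ v : Fin (s + 1), (v : ℕ) • T v) = l ∧ (∑ v, T v) = i

/-- `Σ_{|l| = ldeg} Σ_{(r₀, s, l, i)} Π_{v} ⟨H_v^{i_v}⟩ / i_v!`. -/
noncomputable def psum {d : ℕ} (H : ℕ → Fin d → ℝ) (r₀ s ldeg : ℕ) (i : Fin d → ℕ) : ℝ :=
  ∑ l ∈ mIdx d ldeg, ∑ T ∈ tset d r₀ s l i,
    ∏ v : Fin (s + 1), mpow (H (v : ℕ)) (T v) / (mfact (T v) : ℝ)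

/-- partial derivative in the `j`-th coordinate. -/
noncomputable def pd {d : ℕ} (j : Fin d) (g : (Fin d → ℝ) → ℝ) : (Fin d → ℝ) → ℝ :=
  fun θ => fderiv ℝ g θ (Pi.single j 1)

/-- mixed partial derivative `∂^{|i|}/∂θ^i`. -/
noncomputable def pdM {d : ℕ} (i : Fin d → ℕ) (g : (Fin d → ℝ) → ℝ) : (Fin d → ℝ) → ℝ :=
  (List.finRange d).foldr (fun j acc => (pd j)^[i j] acc) g

/-- `R n = O_p(n^{-e})`: the sequence `n^e ‖R n‖` is bounded in probability. -/
def IsOp {S : Type*} [MeasurableSpace S] {E : Type*} [NormedAddCommGroup E]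
    (P : Measure S) (R : ℕ → S → E) (e : ℝ) : Prop :=
  ∀ ε : ℝ, 0 < ε → ∃ M : ℝ, ∀ᶠ n : ℕ in atTop,
    P {ω | M < (n : ℝ) ^ e * ‖R n ω‖} < ENNReal.ofReal ε

/-- one step of the Theorem 2.2 recursion for `H_r`, `r ≥ 1`. -/
noncomputable def Hstep {d : ℕ} (Iinv : Matrix (Fin d) (Fin d) ℝ)
    (ρv Δv Ev : (Fin d → ℕ) → Fin d → ℝ) (H : ℕ → Fin d → ℝ) (r : ℕ) : Fin d → ℝ :=
  Iinv.mulVec (∑ p ∈ Finset.HasAntidiagonal.antidiagonal r,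
    ((if p.2 = 0 then 0 else ∑ i ∈ mIdx d (p.2 - 1), psum H 0 p.1 p.1 i • ρv i)
      + ∑ i ∈ mIdx d p.2, psum H 0 p.1 p.1 i • Δv i
      + if p.2 = 0 then 0 else ∑ i ∈ mIdx d (p.2 + 1), psum H 0 p.1 p.1 i • Ev i))

/-- the quantities `F_{i,r}` of Lemma 1. -/
noncomputable def Fcoef {d : ℕ} (ϱ δv ℰv : (Fin d → ℕ) → ℝ) (H : ℕ → Fin d → ℝ)
    (i : Fin d → ℕ) (r : ℕ) : ℝ :=
  (∑ p ∈ Finset.HasAntidiagonal.antidiagonal r, if p.1 = 0 then 0 else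
      ∑ j ∈ (mIdx d p.1).filter (fun j => ∀ a, i a ≤ j a), ϱ j * psum H 0 p.2 p.2 (j - i))
    + (∑ p ∈ Finset.HasAntidiagonal.antidiagonal (r + 1), if p.1 < 2 then 0 else
      ∑ j ∈ (mIdx d p.1).filter (fun j => ∀ a, i a ≤ j a), δv j * psum H 0 p.2 p.2 (j - i))
    + ∑ p ∈ Finset.HasAntidiagonal.antidiagonal (r + 2), if p.1 < 3 then 0 else
      ∑ j ∈ (mIdx d p.1).filter (fun j => ∀ a, i a ≤ j a), ℰv j * psum H 0 p.2 p.2 (j - i)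

/-- multi-indices `j` with `2 ≤ |j| ≤ v + 2`. -/
def Jset (d v : ℕ) : Finset (Fin d → ℕ) :=
  (Fintype.piFinset fun _ : Fin d => Finset.range (v + 3)).filter fun j =>
    2 ≤ msum j ∧ msum j ≤ v + 2

/-- inner sum over families `(u_j)` in the definition of `N_{i,r}`. -/
noncomputable def usum {d : ℕ} (F : (Fin d → ℕ) → ℕ → ℝ) (v cv : ℕ) (kv : Fin d → ℕ) : ℝ :=
  ∑ u ∈ ((Jset d v).pi fun _ => Finset.range (cv + 1)).filter
      (fun u => (∑ j ∈ (Jset d v).attach, u j.1 j.2 • j.1) = kv ∧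
        (∑ j ∈ (Jset d v).attach, u j.1 j.2) = cv),
    ∏ j ∈ (Jset d v).attach,
      F j.1 v ^ u j.1 j.2 / ((Nat.factorial (u j.1 j.2) : ℝ) * (mfact j.1 : ℝ) ^ u j.1 j.2)

/-- the coefficients `N_{i,r}` of Lemma 1. -/
noncomputable def Ncoef {d : ℕ} (F : (Fin d → ℕ) → ℕ → ℝ) (i : Fin d → ℕ) (r : ℕ) : ℝ :=
  ∑ c ∈ (Fintype.piFinset fun _ : Fin (r + 1) => Finset.range (r + 1)).filter
      (fun c => c 0 = 0 ∧ (∑ v : Fin (r + 1), (v : ℕ) * c v) = r),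
    ∑ K ∈ (Fintype.piFinset fun _ : Fin (r + 1) =>
        Fintype.piFinset fun j : Fin d => Finset.range (i j + 1)).filter
      (fun K => K 0 = 0 ∧ (∑ v, K v) = i ∧
        ∀ v, 2 * c v ≤ msum (K v) ∧ msum (K v) ≤ ((v : ℕ) + 2) * c v),
      ∏ v : Fin (r + 1), usum F (v : ℕ) (c v) (K v)

/-- density of `N(0, I⁻¹)`, written in terms of the inverse covariance matrix `Imat`. -/
noncomputable def gphi {d : ℕ} (Imat : Matrix (Fin d) (Fin d) ℝ) (θ : Fin d → ℝ) : ℝ :=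
  Real.sqrt (Imat.det / (2 * Real.pi) ^ d) * Real.exp (-(θ ⬝ᵥ Imat.mulVec θ) / 2)

/-- the `a r`-th marginal moment `σ(a_r)` of `N(0, I⁻¹)`. -/
noncomputable def gmom {d : ℕ} (Imat : Matrix (Fin d) (Fin d) ℝ) (a : Fin d → ℕ) (r : Fin d) : ℝ :=
  ∫ θ : Fin d → ℝ, θ r ^ a r * gphi Imat θ

/-- the vector `Ψ_i(u)`. -/
noncomputable def PsiFun {d : ℕ} (Imat : Matrix (Fin d) (Fin d) ℝ) (a : Fin d → ℕ)
    (i : Fin d → ℕ) (u : Fin d → ℝ) : Fin d → ℝ :=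
  fun kk => ∫ θ : Fin d → ℝ, θ kk ^ (a kk - 1) * mpow (θ + u) i * gphi Imat (θ + u)

/-- `Ψ_i^{(j)} = Ψ_i^{(j)}(0)`. -/
noncomputable def PsiD {d : ℕ} (Imat : Matrix (Fin d) (Fin d) ℝ) (a : Fin d → ℕ)
    (i j : Fin d → ℕ) : Fin d → ℝ :=
  fun kk => pdM j (fun u => PsiFun Imat a i u kk) 0

/-- `M_{j,r}`, for a matrix `A = ({σ(a)}I)⁻¹`, Gaussian moment vectors `Ps` and
coefficients `N`. -/
noncomputable def Mcoef {d : ℕ} (A : Matrix (Fin d) (Fin d) ℝ)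
    (Ps : (Fin d → ℕ) → (Fin d → ℕ) → Fin d → ℝ)
    (N : (Fin d → ℕ) → ℕ → ℝ) (j : Fin d → ℕ) (r : ℕ) : Fin d → ℝ :=
  A.mulVec (∑ t ∈ (Finset.Icc (2 * min 1 r + msum j) (3 * r + msum j)).filter (fun s => s % 2 = 1),
    ∑ i ∈ (mIdx d t).filter (fun i => ∀ b, j b ≤ i b),
      (((mfact j : ℝ))⁻¹ * N (i - j) r) • Ps (i - j) j)

/-- the recursion step for `Q_r`, `r ≥ 2`. -/
noncomputable def Qstep {d : ℕ} (M : (Fin d → ℕ) → ℕ → Fin d → ℝ)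
    (Q : ℕ → Fin d → ℝ) (r : ℕ) : Fin d → ℝ :=
  M 0 r
    + (∑ m ∈ Finset.Ico 1 r, ∑ t ∈ Finset.Icc 1 m, ∑ i ∈ mIdx d t,
        ((mfact i : ℝ) * psum Q 1 m m i) • M i (r - m))
    + ∑ t ∈ (Finset.Icc 3 r).filter (fun s => s % 2 = 1), ∑ i ∈ mIdx d t,
        ((mfact i : ℝ) * psum Q 1 (r - 1) r i) • M i 0


/-! ### Auxiliary lemmas for Example 1 -/

/-- standard 1-d Gaussian density with inverse variance `c`. -/
noncomputable def g1d (c x : ℝ) : ℝ :=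
  Real.sqrt (c / (2 * Real.pi)) * Real.exp (-(c * x ^ 2) / 2)

/-- `n`-th moment integral of `g1d c`. -/
noncomputable def gint (c : ℝ) (n : ℕ) : ℝ := ∫ x : ℝ, x ^ n * g1d c x

lemma sqrt_finset_prod {ι : Type*} (s : Finset ι) (f : ι → ℝ) (hf : ∀ i ∈ s, 0 ≤ f i) :
    Real.sqrt (∏ i ∈ s, f i) = ∏ i ∈ s, Real.sqrt (f i) := by
  induction s using Finset.cons_induction with
  | empty => simp
  | cons a s ha ih =>
    rw [Finset.prod_cons, Finset.prod_cons,
      Real.sqrt_mul (hf a (Finset.mem_cons_self a s)),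
      ih fun i hi => hf i (Finset.mem_cons_of_mem hi)]

lemma gphi_diagonal {d : ℕ} (c : Fin d → ℝ) (hc : ∀ j, 0 < c j) (x : Fin d → ℝ) :
    gphi (Matrix.diagonal c) x = ∏ j, g1d (c j) (x j) := by
  unfold gphi g1d
  have h1 : x ⬝ᵥ (Matrix.diagonal c).mulVec x = ∑ j, c j * x j ^ 2 := by
    simp only [dotProduct, Matrix.mulVec_diagonal]
    exact Finset.sum_congr rfl fun j _ => by ring
  have h2 : Real.sqrt ((Matrix.diagonal c).det / (2 * Real.pi) ^ d)
      = ∏ j, Real.sqrt (c j / (2 * Real.pi)) := by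
    rw [Matrix.det_diagonal,
      show ((2 * Real.pi) ^ d : ℝ) = ∏ _j : Fin d, (2 * Real.pi) by
        simp [Finset.prod_const, Finset.card_univ],
      ← Finset.prod_div_distrib,
      sqrt_finset_prod _ _ fun i _ => div_nonneg (hc i).le (by positivity)]
  have h3 : Real.exp (-(x ⬝ᵥ (Matrix.diagonal c).mulVec x) / 2)
      = ∏ j, Real.exp (-(c j * x j ^ 2) / 2) := by
    rw [← Real.exp_sum]
    congr 1
    rw [h1, ← Finset.sum_div, Finset.sum_neg_distrib]
  rw [h2, h3, Finset.prod_mul_distrib]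

lemma eq_of_sq {a b : ℝ} (ha : 0 ≤ a) (hb : 0 ≤ b) (h : a ^ 2 = b ^ 2) : a = b := by
  rw [← Real.sqrt_sq ha, ← Real.sqrt_sq hb, h]

lemma rpow_sq_eval {x : ℝ} (hx : 0 < x) (m : ℕ) (E : ℝ) (hE : E * 2 = -(m : ℝ)) :
    ((x ^ E) ^ 2 : ℝ) = (x ^ m)⁻¹ := by
  rw [← Real.rpow_natCast (x ^ E) 2, ← Real.rpow_mul hx.le]
  have h2 : E * ((2 : ℕ) : ℝ) = -(m : ℝ) := by push_cast; push_cast at hE; linarith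
  rw [h2, ← Real.rpow_natCast x m, ← Real.rpow_neg hx.le]

lemma integral_even_gauss {b : ℝ} (hb : 0 < b) {n : ℕ} (hn : Even n) :
    ∫ x : ℝ, x ^ n * Real.exp (-b * x ^ 2)
      = 2 * (b ^ (-((n : ℝ) + 1) / 2) * (1 / 2) * Real.Gamma (((n : ℝ) + 1) / 2)) := by
  have h1 : (fun x : ℝ => x ^ n * Real.exp (-b * x ^ 2))
      = fun x : ℝ => |x| ^ n * Real.exp (-b * |x| ^ 2) := by
    funext x; rw [hn.pow_abs, sq_abs]
  rw [h1, integral_comp_abs (f := fun y : ℝ => y ^ n * Real.exp (-b * y ^ 2))]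
  congr 1
  rw [show (∫ x in Set.Ioi (0 : ℝ), x ^ n * Real.exp (-b * x ^ 2))
      = ∫ x in Set.Ioi (0 : ℝ), x ^ (n : ℝ) * Real.exp (-b * x ^ (2 : ℝ)) from
    MeasureTheory.setIntegral_congr_fun measurableSet_Ioi fun x _ => by
      rw [Real.rpow_natCast, show (2 : ℝ) = ((2 : ℕ) : ℝ) by norm_num, Real.rpow_natCast]]
  rw [integral_rpow_mul_exp_neg_mul_rpow two_pos
    (by have : (0 : ℝ) ≤ n := Nat.cast_nonneg n; linarith) hb]

lemma gint_eval_even {c : ℝ} (hc : 0 < c) {n : ℕ} (hn : Even n) :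
    gint c n = Real.sqrt (c / (2 * Real.pi)) *
      (2 * ((c / 2) ^ (-((n : ℝ) + 1) / 2) * (1 / 2) * Real.Gamma (((n : ℝ) + 1) / 2))) := by
  unfold gint
  have h : (∫ x : ℝ, x ^ n * g1d c x)
      = Real.sqrt (c / (2 * Real.pi)) * ∫ x : ℝ, x ^ n * Real.exp (-(c / 2) * x ^ 2) := by
    rw [← integral_const_mul]
    congr 1
    funext x
    simp only [g1d]
    rw [show -(c * x ^ 2) / 2 = -(c / 2) * x ^ 2 by ring]
    ring
  rw [h, integral_even_gauss (half_pos hc) hn]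

lemma gint_even_val {c : ℝ} (hc : 0 < c) {n : ℕ} (hn : Even n) {t γ : ℝ}
    (hΓ : Real.Gamma (((n : ℝ) + 1) / 2) = γ * Real.sqrt Real.pi)
    (ht : 0 ≤ t) (hγ : 0 ≤ γ)
    (hE : (-((n : ℝ) + 1) / 2) * 2 = -(((n + 1 : ℕ)) : ℝ))
    (hsq : (c / (2 * Real.pi)) * (2 ^ 2 * ((((c / 2) ^ (n + 1))⁻¹ * (1 / 2) ^ 2) *
      (γ ^ 2 * Real.pi))) = t ^ 2) :
    gint c n = t := by
  rw [gint_eval_even hc hn, hΓ]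
  refine eq_of_sq (by positivity) ht ?_
  rw [mul_pow, mul_pow, mul_pow, mul_pow, mul_pow,
    Real.sq_sqrt (by positivity : (0 : ℝ) ≤ c / (2 * Real.pi)),
    Real.sq_sqrt Real.pi_pos.le, rpow_sq_eval (half_pos hc) (n + 1) _ hE]
  linear_combination hsq

lemma gint_zero {c : ℝ} (hc : 0 < c) : gint c 0 = 1 := by
  have hpi := Real.pi_pos
  refine gint_even_val hc Even.zero ?_ zero_le_one zero_le_one ?_ ?_
  · rw [show (((0 : ℕ) : ℝ) + 1) / 2 = 1 / 2 by norm_num, Real.Gamma_one_half_eq, one_mul]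
  · norm_num
  · field_simp
    ring

lemma gint_two {c : ℝ} (hc : 0 < c) : gint c 2 = c⁻¹ := by
  have hpi := Real.pi_pos
  refine gint_even_val hc ⟨1, by norm_num⟩ ?_ (by positivity) (by norm_num : (0:ℝ) ≤ 1/2) ?_ ?_
  · rw [show (((2 : ℕ) : ℝ) + 1) / 2 = 1 / 2 + 1 by norm_num,
      Real.Gamma_add_one (by norm_num), Real.Gamma_one_half_eq]
  · norm_num
  · field_simp
    ring

lemma gint_four {c : ℝ} (hc : 0 < c) : gint c 4 = 3 * (c ^ 2)⁻¹ := by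
  have hpi := Real.pi_pos
  refine gint_even_val hc ⟨2, by norm_num⟩ ?_ (by positivity) (by norm_num : (0:ℝ) ≤ 3/4) ?_ ?_
  · rw [show (((4 : ℕ) : ℝ) + 1) / 2 = 3 / 2 + 1 by norm_num,
      Real.Gamma_add_one (by norm_num), show (3 / 2 : ℝ) = 1 / 2 + 1 by norm_num,
      Real.Gamma_add_one (by norm_num), Real.Gamma_one_half_eq]
    ring
  · norm_num
  · field_simp
    ring

lemma gint_one (c : ℝ) : gint c 1 = 0 := by
  unfold gint
  have h := integral_neg_eq_self (fun x : ℝ => x ^ 1 * g1d c x) (volume : Measure ℝ)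
  simp only [g1d, pow_one] at h
  rw [show (fun x : ℝ => -x * (Real.sqrt (c / (2 * Real.pi)) *
        Real.exp (-(c * (-x) ^ 2) / 2)))
      = fun x : ℝ => -(x * (Real.sqrt (c / (2 * Real.pi)) *
        Real.exp (-(c * x ^ 2) / 2))) from funext fun x => by rw [neg_sq]; ring] at h
  rw [integral_neg] at h
  simp only [g1d, pow_one]
  linarith

lemma prod_single_pow {d : ℕ} (x : Fin d → ℝ) (t : Fin d) (k : ℕ) :
    (∏ l, x l ^ (Pi.single t k : Fin d → ℕ) l) = x t ^ k := by
  rw [Finset.prod_eq_single t (fun b _ hb => by rw [Pi.single_eq_of_ne hb, pow_zero])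
    (fun h => absurd (Finset.mem_univ t) h), Pi.single_eq_same]

lemma integral_prod_pow_gphi {d : ℕ} (c : Fin d → ℝ) (hc : ∀ j, 0 < c j) (n : Fin d → ℕ) :
    ∫ x : Fin d → ℝ, (∏ j, x j ^ n j) * gphi (Matrix.diagonal c) x
      = ∏ j, gint (c j) (n j) := by
  rw [show (fun x : Fin d → ℝ => (∏ j, x j ^ n j) * gphi (Matrix.diagonal c) x)
      = fun x : Fin d → ℝ => ∏ j, (fun y : ℝ => y ^ n j * g1d (c j) y) (x j) from
    funext fun x => by rw [gphi_diagonal c hc x, ← Finset.prod_mul_distrib]]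
  exact MeasureTheory.integral_fintype_prod_eq_prod
    (fun j (y : ℝ) => y ^ n j * g1d (c j) y)

lemma gint_prod_single {d : ℕ} (c : Fin d → ℝ) (hc : ∀ j, 0 < c j) (t : Fin d) (k : ℕ) :
    (∏ l, gint (c l) ((Pi.single t k : Fin d → ℕ) l)) = gint (c t) k := by
  rw [Finset.prod_eq_single t
    (fun b _ hb => by rw [Pi.single_eq_of_ne hb, gint_zero (hc b)])
    (fun h => absurd (Finset.mem_univ t) h), Pi.single_eq_same]

/-- **Example 1: Jeffreys' prior is the second-order expansion matching prior for
independent diagonal Fisher information.** -/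
theorem jeffreys_second_order_matching
    (d m : ℕ) (hd : 1 ≤ d)
    (Θ : Set (Fin d → ℝ)) (hΘ : IsOpen Θ)
    -- the parametric family of densities and the distributions `P_θ`
    (f : (Fin m → ℝ) → (Fin d → ℝ) → ℝ)
    (Pm : (Fin d → ℝ) → Measure (Fin m → ℝ))
    (hPm : ∀ θ, Pm θ = volume.withDensity fun x' => ENNReal.ofReal (f x' θ))
    -- `ℰ_i(θ) = E_θ[∂^{|i|} log f(x|θ)/∂θ^i]`
    (ℰs : (Fin d → ℕ) → (Fin d → ℝ) → ℝ)
    (hℰs : ∀ i θ, ℰs i θ = ∫ x', pdM i (fun η => Real.log (f x' η)) θ ∂(Pm θ))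
    -- the Fisher information, diagonal with `j`-th entry depending only on `θ_j`
    (Imat : (Fin d → ℝ) → Matrix (Fin d) (Fin d) ℝ)
    (hImat : ∀ θ, Imat θ = Matrix.of fun a b =>
      ∫ x', pd a (fun η => Real.log (f x' η)) θ * pd b (fun η => Real.log (f x' η)) θ ∂(Pm θ))
    (Ijj : Fin d → ℝ → ℝ)
    (hIdiag : ∀ θ ∈ Θ, Imat θ = Matrix.diagonal fun j => Ijj j (θ j))
    (hIpos : ∀ θ ∈ Θ, ∀ j, 0 < Ijj j (θ j))
    (hIreg : ∀ θ ∈ Θ, ∀ j, ContDiffAt ℝ 1 (Ijj j) (θ j))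
    -- the vanishing / derivative form of the third-order `ℰ_i`
    (hE0 : ∀ θ ∈ Θ, ∀ i : Fin d → ℕ, msum i = 3 → (¬ ∃ j, i = Pi.single j 3) →
      ℰs i θ = 0)
    (hE3 : ∀ θ ∈ Θ, ∀ j, ℰs (Pi.single j 3) θ = -deriv (Ijj j) (θ j))
    -- take `a = (2, …, 2)`
    (a : Fin d → ℕ) (ha : a = fun _ => 2) :
    ∀ θ ∈ Θ,
      -- `{σ(a)}(θ) = I(θ)⁻¹`
      (Matrix.diagonal fun rr => gmom (Imat θ) a rr) = (Imat θ)⁻¹ ∧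
      -- `Ψ_{3e_j}(θ) = 3 I_jj(θ_j)⁻² e_j`
      (∀ j, PsiFun (Imat θ) a (Pi.single j 3) 0 =
        fun kk => if kk = j then 3 * ((Ijj j (θ j)) ^ 2)⁻¹ else 0) ∧
      -- the matching vector equals `((1/2) I₁₁'/I₁₁, …, (1/2) I_dd'/I_dd)`
      (-(Matrix.diagonal fun rr => gmom (Imat θ) a rr)⁻¹.mulVec
          (∑ i ∈ mIdx d 3, (ℰs i θ / (mfact i : ℝ)) • PsiFun (Imat θ) a i 0)
        = fun j => deriv (Ijj j) (θ j) / Ijj j (θ j) / 2) ∧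
      -- Jeffreys' prior `π(θ) = Π_j I_jj(θ_j)^{1/2} = |I(θ)|^{1/2}` solves the
      -- second-order expansion matching equation
      (∀ j, pd j (fun η => Real.log (∏ l, Real.sqrt (Ijj l (η l)))) θ =
        (-(Matrix.diagonal fun rr => gmom (Imat θ) a rr)⁻¹.mulVec
          (∑ i ∈ mIdx d 3, (ℰs i θ / (mfact i : ℝ)) • PsiFun (Imat θ) a i 0)) j) ∧
      (∏ l, Real.sqrt (Ijj l (θ l))) = Real.sqrt (Imat θ).det := by
  subst ha
  intro θ hθ
  classical
  set c : Fin d → ℝ := fun j => Ijj j (θ j) with hcdef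
  have hcpos : ∀ j, 0 < c j := fun j => hIpos θ hθ j
  have hId : Imat θ = Matrix.diagonal c := hIdiag θ hθ
  -- the moments of the diagonal Gaussian
  have hgmomv : ∀ r, gmom (Imat θ) (fun _ => 2) r = (c r)⁻¹ := by
    intro r
    have h1 : gmom (Imat θ) (fun _ => 2) r
        = ∫ x : Fin d → ℝ, (∏ l, x l ^ (Pi.single r 2 : Fin d → ℕ) l) *
            gphi (Matrix.diagonal c) x := by
      simp only [gmom, hId]
      congr 1
      funext x
      rw [prod_single_pow]
    rw [h1, integral_prod_pow_gphi c hcpos, gint_prod_single c hcpos, gint_two (hcpos r)]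
  -- Part 1
  have hdet : IsUnit (Matrix.diagonal c).det := by
    rw [Matrix.det_diagonal]
    exact isUnit_iff_ne_zero.mpr (Finset.prod_pos fun i _ => hcpos i).ne'
  have hinvdiag : (Matrix.diagonal c)⁻¹ = Matrix.diagonal fun r => (c r)⁻¹ := by
    refine Matrix.inv_eq_right_inv ?_
    rw [Matrix.diagonal_mul_diagonal,
      show (fun r => c r * (c r)⁻¹) = fun _ : Fin d => (1 : ℝ) from
        funext fun r => mul_inv_cancel₀ (hcpos r).ne', Matrix.diagonal_one]
  have part1 : (Matrix.diagonal fun rr => gmom (Imat θ) (fun _ => 2) rr) = (Imat θ)⁻¹ := by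
    have hg : (fun rr => gmom (Imat θ) (fun _ => 2) rr) = fun r => (c r)⁻¹ := funext hgmomv
    rw [hg, hId, hinvdiag]
  -- Part 2
  have part2 : ∀ j, PsiFun (Imat θ) (fun _ => 2) (Pi.single j 3) 0 =
      fun kk => if kk = j then 3 * ((Ijj j (θ j)) ^ 2)⁻¹ else 0 := by
    intro j
    funext kk
    have h1 : PsiFun (Imat θ) (fun _ => 2) (Pi.single j 3) 0 kk
        = ∫ x : Fin d → ℝ,
            (∏ l, x l ^ ((Pi.single j 3 + Pi.single kk 1 : Fin d → ℕ) l)) *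
              gphi (Matrix.diagonal c) x := by
      simp only [PsiFun, hId]
      congr 1
      funext x
      rw [add_zero]
      have h2 : (∏ l, x l ^ ((Pi.single j 3 + Pi.single kk 1 : Fin d → ℕ) l))
          = x j ^ 3 * x kk := by
        simp only [Pi.add_apply, pow_add]
        rw [Finset.prod_mul_distrib, prod_single_pow, prod_single_pow, pow_one]
      rw [h2]
      have hm : mpow x (Pi.single j 3) = x j ^ 3 := prod_single_pow x j 3
      rw [hm]
      ring_nf
    rw [h1, integral_prod_pow_gphi c hcpos]
    by_cases h : kk = j
    · subst h
      rw [if_pos rfl,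
        show (Pi.single kk 3 + Pi.single kk 1 : Fin d → ℕ) = Pi.single kk 4 from
          funext fun l => by
            rcases eq_or_ne l kk with rfl | hl
            · simp
            · simp [Pi.single_eq_of_ne hl],
        gint_prod_single c hcpos, gint_four (hcpos kk)]
    · rw [if_neg h]
      refine Finset.prod_eq_zero (Finset.mem_univ kk) ?_
      rw [Pi.add_apply, Pi.single_eq_of_ne h, Pi.single_eq_same]
      simpa using gint_one (c kk)
  -- the sum over third-order multi-indices
  have hmfact : ∀ j : Fin d, (mfact (Pi.single j 3 : Fin d → ℕ) : ℝ) = 6 := by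
    intro j
    have : mfact (Pi.single j 3 : Fin d → ℕ) = 6 := by
      unfold mfact
      rw [Finset.prod_eq_single j
        (fun b _ hb => by rw [Pi.single_eq_of_ne hb]; rfl)
        (fun h => absurd (Finset.mem_univ j) h), Pi.single_eq_same]
      decide
    rw [this]; norm_num
  have hinj : Function.Injective (fun j : Fin d => (Pi.single j 3 : Fin d → ℕ)) := by
    intro j j' h
    by_contra hne
    have h2 : (Pi.single j 3 : Fin d → ℕ) j = (Pi.single j' 3 : Fin d → ℕ) j := congrFun h j
    rw [Pi.single_eq_same, Pi.single_eq_of_ne hne] at h2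
    exact absurd h2 (by norm_num)
  have hsub : (Finset.univ.image fun j : Fin d => (Pi.single j 3 : Fin d → ℕ)) ⊆ mIdx d 3 := by
    intro i hi
    obtain ⟨j, -, rfl⟩ := Finset.mem_image.mp hi
    refine Finset.mem_filter.mpr ⟨Fintype.mem_piFinset.mpr fun l => Finset.mem_range.mpr ?_, ?_⟩
    · rcases eq_or_ne l j with rfl | hl
      · simp
      · simp [Pi.single_eq_of_ne hl]
    · unfold msum
      rw [Finset.sum_pi_single']
      simp
  have hsum : (∑ i ∈ mIdx d 3, (ℰs i θ / (mfact i : ℝ)) •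
        PsiFun (Imat θ) (fun _ => 2) i 0)
      = fun kk => -(deriv (Ijj kk) (θ kk)) / 6 * (3 * ((c kk) ^ 2)⁻¹) := by
    rw [← Finset.sum_subset hsub (fun i hi hni => by
      have h3 : msum i = 3 := (Finset.mem_filter.mp hi).2
      have h0 : ℰs i θ = 0 := hE0 θ hθ i h3 (fun ⟨j, hj⟩ =>
        hni (Finset.mem_image.mpr ⟨j, Finset.mem_univ j, hj.symm⟩))
      rw [h0, zero_div, zero_smul])]
    rw [Finset.sum_image fun j _ j' _ h => hinj h]
    funext kk
    rw [Finset.sum_apply]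
    have hterm : ∀ j : Fin d,
        ((ℰs (Pi.single j 3) θ / (mfact (Pi.single j 3 : Fin d → ℕ) : ℝ)) •
          PsiFun (Imat θ) (fun _ => 2) (Pi.single j 3) 0) kk
        = if kk = j then -(deriv (Ijj j) (θ j)) / 6 * (3 * ((c j) ^ 2)⁻¹) else 0 := by
      intro j
      rw [Pi.smul_apply, part2 j, hE3 θ hθ j, hmfact j]
      beta_reduce
      by_cases h : kk = j
      · rw [if_pos h, if_pos h, smul_eq_mul]
      · rw [if_neg h, if_neg h, smul_zero]
    simp only [hterm]
    rw [Finset.sum_eq_single kk (fun b _ hb => if_neg fun h => hb h.symm)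
      (fun h => absurd (Finset.mem_univ kk) h), if_pos rfl]
  -- Part 3
  have part3 : (-(Matrix.diagonal fun rr => gmom (Imat θ) (fun _ => 2) rr)⁻¹.mulVec
        (∑ i ∈ mIdx d 3, (ℰs i θ / (mfact i : ℝ)) • PsiFun (Imat θ) (fun _ => 2) i 0)
      : Fin d → ℝ) = fun j => deriv (Ijj j) (θ j) / Ijj j (θ j) / 2 := by
    rw [hsum, part1, hId, Matrix.nonsing_inv_nonsing_inv _ hdet]
    funext j
    rw [Pi.neg_apply, Matrix.mulVec_diagonal]
    have hcj : c j = Ijj j (θ j) := rfl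
    rw [← hcj]
    field_simp [(hcpos j).ne']
    ring
  refine ⟨part1, part2, part3, ?_, ?_⟩
  · -- Part 4: Jeffreys' prior solves the matching equation
    intro j
    rw [part3]
    have hderivl : ∀ l : Fin d, HasFDerivAt (fun η : Fin d → ℝ => Real.log (Ijj l (η l)) / 2)
        ((deriv (Ijj l) (θ l) / Ijj l (θ l) / 2) •
          (ContinuousLinearMap.proj (R := ℝ) (φ := fun _ : Fin d => ℝ) l)) θ := by
      intro l
      have h1 : HasDerivAt (Ijj l) (deriv (Ijj l) (θ l)) (θ l) :=
        ((hIreg θ hθ l).differentiableAt one_ne_zero).hasDerivAt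
      have h2 : HasDerivAt (fun y => Real.log (Ijj l y))
          (deriv (Ijj l) (θ l) / Ijj l (θ l)) (θ l) := by
        have h := (Real.hasDerivAt_log (hIpos θ hθ l).ne').comp (θ l) h1
        rw [div_eq_inv_mul]; exact h
      have hproj : HasFDerivAt (fun η : Fin d → ℝ => η l)
          (ContinuousLinearMap.proj (R := ℝ) (φ := fun _ : Fin d => ℝ) l) θ :=
        (ContinuousLinearMap.proj (R := ℝ) (φ := fun _ : Fin d => ℝ) l).hasFDerivAt
      have h3 : HasFDerivAt (fun η : Fin d → ℝ => Real.log (Ijj l (η l)))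
          ((deriv (Ijj l) (θ l) / Ijj l (θ l)) •
            (ContinuousLinearMap.proj (R := ℝ) (φ := fun _ : Fin d => ℝ) l)) θ :=
        by have := h2.comp_hasFDerivAt θ hproj; exact this
      have h4 : HasFDerivAt (fun η : Fin d → ℝ => Real.log (Ijj l (η l)) / 2)
          ((2⁻¹ : ℝ) • ((deriv (Ijj l) (θ l) / Ijj l (θ l)) •
            (ContinuousLinearMap.proj (R := ℝ) (φ := fun _ : Fin d => ℝ) l))) θ :=
        h3.mul_const (2⁻¹ : ℝ)
      convert h4 using 1
      ext v
      simp [div_div]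
      ring
    have hsumF : HasFDerivAt (fun η : Fin d → ℝ => ∑ l, Real.log (Ijj l (η l)) / 2)
        (∑ l, (deriv (Ijj l) (θ l) / Ijj l (θ l) / 2) •
          (ContinuousLinearMap.proj (R := ℝ) (φ := fun _ : Fin d => ℝ) l)) θ :=
      HasFDerivAt.fun_sum fun l _ => hderivl l
    have hall : ∀ᶠ η : Fin d → ℝ in nhds θ, ∀ l, 0 < Ijj l (η l) := by
      rw [eventually_all]
      intro l
      have h5 : ContinuousAt (fun η : Fin d → ℝ => η l) θ := (continuous_apply l).continuousAt
      have hcont : ContinuousAt (fun η : Fin d → ℝ => Ijj l (η l)) θ :=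
        ContinuousAt.comp (x := θ) (f := fun η : Fin d → ℝ => η l)
          ((hIreg θ hθ l).continuousAt) h5
      exact hcont.eventually (lt_mem_nhds (hIpos θ hθ l))
    have heq : (fun η : Fin d → ℝ => Real.log (∏ l, Real.sqrt (Ijj l (η l))))
        =ᶠ[nhds θ] fun η => ∑ l, Real.log (Ijj l (η l)) / 2 := by
      filter_upwards [hall] with η hη
      rw [Real.log_prod fun l _ => (Real.sqrt_pos.mpr (hη l)).ne']
      exact Finset.sum_congr rfl fun l _ => by rw [Real.log_sqrt (hη l).le]
    have hg : HasFDerivAt (fun η : Fin d → ℝ => Real.log (∏ l, Real.sqrt (Ijj l (η l))))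
        (∑ l, (deriv (Ijj l) (θ l) / Ijj l (θ l) / 2) •
          (ContinuousLinearMap.proj (R := ℝ) (φ := fun _ : Fin d => ℝ) l)) θ :=
      hsumF.congr_of_eventuallyEq heq
    show fderiv ℝ (fun η : Fin d → ℝ => Real.log (∏ l, Real.sqrt (Ijj l (η l)))) θ
        (Pi.single j 1) = deriv (Ijj j) (θ j) / Ijj j (θ j) / 2
    rw [hg.fderiv, ContinuousLinearMap.sum_apply]
    simp only [ContinuousLinearMap.smul_apply, ContinuousLinearMap.proj_apply]
    rw [Finset.sum_eq_single j
      (fun b _ hb => by rw [Pi.single_eq_of_ne hb, smul_zero])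
      (fun h => absurd (Finset.mem_univ j) h)]
    rw [Pi.single_eq_same, smul_eq_mul, mul_one]
  · -- Part 5: the Jeffreys prior identity
    rw [hId, Matrix.det_diagonal,
      sqrt_finset_prod _ _ fun l _ => (hcpos l).le]


end Paper
end

section
/- The second-order expansion matching prior for the normal model is π(μ,v) ∝ v^{−5/2} (Example 2). For the normal family f(x|μ,v) = (2πv)^{−1/2} exp(−(x−μ)²/(2v)) with parameter θ = (μ, v), v > 0: the inverse Fisher information is I(θ)⁻¹ = diag(v, 2v²); ℰ_{(3,0)} = ℰ_{(1,2)} = 0, ℰ_{(2,1)} = 1/v², ℰ_{(0,3)} = 2/v³; with a = (2,2), {σ(a)} = I⁻¹ = diag(v, 2v²), and for Z = (Z₁, Z₂) ~ N(0, diag(v, 2v²)): Ψ_{(2,1)} = (E[Z₁³Z₂], E[Z₁²Z₂²]) = (0, 2v³) and Ψ_{(0,3)} = (E[Z₁Z₂³], E[Z₂⁴]) = (0, 12v⁴). Consequently −{σ(a)}⁻¹ Σ_{|i|=3} (ℰ_i/i!) Ψ_i = (0, −5/(2v)), and the prior π(μ, v) = v^{−5/2} satisfies the second-order matching equation ∇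 log π(μ,v) = (0, −5/(2v)); hence v^{−5/2} is (up to a multiplicative constant) the second-order expansion matching prior. -/
open MeasureTheory Filter Matrix Real
open scoped BigOperators ENNReal NNReal Topology

namespace Paper

section Aux

lemma integrable_pow_mul_gauss {b : ℝ} (hb : 0 < b) (n : ℕ) :
    Integrable fun x : ℝ => x ^ n * Real.exp (-b * x ^ 2) := by
  simpa [Real.rpow_natCast] using
    integrable_rpow_mul_exp_neg_mul_sq hb (show (-1 : ℝ) < n by exact lt_of_lt_of_le (by norm_num) (Nat.cast_nonneg n))

lemma gauss_rec {b : ℝ} (hb : 0 < b) (n : ℕ) :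
    ∫ x : ℝ, x ^ (n + 2) * Real.exp (-b * x ^ 2)
      = ((n + 1 : ℝ) / (2 * b)) * ∫ x : ℝ, x ^ n * Real.exp (-b * x ^ 2) := by
  have hderiv : ∀ x : ℝ, HasDerivAt (fun x : ℝ => x ^ (n+1) * Real.exp (-b * x ^ 2))
      ((n+1 : ℝ) * x ^ n * Real.exp (-b * x ^ 2)
        - 2 * b * (x ^ (n+2) * Real.exp (-b * x ^ 2))) x := by
    intro x
    have h1 : HasDerivAt (fun x : ℝ => x ^ (n+1)) ((n+1 : ℝ) * x ^ n) x := by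
      simpa using hasDerivAt_pow (n+1) x
    have h2 : HasDerivAt (fun x : ℝ => Real.exp (-b * x ^ 2)) ((-b * (2 * x)) * Real.exp (-b * x ^ 2)) x := by
      have : HasDerivAt (fun x : ℝ => -b * x ^ 2) (-b * (2 * x)) x := by
        simpa using ((hasDerivAt_pow 2 x).const_mul (-b))
      simpa [mul_comm] using this.exp
    have := h1.mul h2
    refine this.congr_deriv ?_
    ring
  have hint : Integrable (fun x : ℝ => (n+1 : ℝ) * x ^ n * Real.exp (-b * x ^ 2)
      - 2 * b * (x ^ (n+2) * Real.exp (-b * x ^ 2))) := by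
    refine Integrable.sub ?_ ?_
    · simpa [mul_assoc] using (integrable_pow_mul_gauss hb n).const_mul (n+1 : ℝ)
    · exact (integrable_pow_mul_gauss hb (n+2)).const_mul _
  have hF : Integrable (fun x : ℝ => x ^ (n+1) * Real.exp (-b * x ^ 2)) :=
    integrable_pow_mul_gauss hb (n+1)
  have h0 := integral_eq_zero_of_hasDerivAt_of_integrable hderiv hint hF
  rw [integral_sub (by simpa [mul_assoc] using (integrable_pow_mul_gauss hb n).const_mul (n+1 : ℝ))
    ((integrable_pow_mul_gauss hb (n+2)).const_mul _)] at h0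
  rw [show (fun a : ℝ => (n+1 : ℝ) * a ^ n * rexp (-b * a ^ 2))
      = (fun a : ℝ => (n+1 : ℝ) * (a ^ n * rexp (-b * a ^ 2))) by funext a; ring,
    integral_const_mul, integral_const_mul] at h0
  have hb' : (2 * b) ≠ 0 := by positivity
  simp only [neg_mul] at h0 ⊢
  field_simp
  linarith [h0]

lemma gauss0 {b : ℝ} (hb : 0 < b) :
    ∫ x : ℝ, x ^ 0 * Real.exp (-b * x ^ 2) = Real.sqrt (Real.pi / b) := by
  simpa using integral_gaussian b

lemma gauss1 {b : ℝ} (hb : 0 < b) : ∫ x : ℝ, x ^ 1 * Real.exp (-b * x ^ 2) = 0 := by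
  have hderiv : ∀ x : ℝ, HasDerivAt (fun x : ℝ => -(2*b)⁻¹ * Real.exp (-b * x ^ 2))
      (x ^ 1 * Real.exp (-b * x ^ 2)) x := by
    intro x
    have h2 : HasDerivAt (fun x : ℝ => Real.exp (-b * x ^ 2)) ((-b * (2 * x)) * Real.exp (-b * x ^ 2)) x := by
      have : HasDerivAt (fun x : ℝ => -b * x ^ 2) (-b * (2 * x)) x := by
        simpa using ((hasDerivAt_pow 2 x).const_mul (-b))
      simpa [mul_comm] using this.exp
    have := h2.const_mul (-(2*b)⁻¹)
    refine this.congr_deriv ?_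
    have : b ≠ 0 := ne_of_gt hb
    field_simp
  have hF : Integrable (fun x : ℝ => -(2*b)⁻¹ * Real.exp (-b * x ^ 2)) :=
    (integrable_exp_neg_mul_sq hb).const_mul _
  exact integral_eq_zero_of_hasDerivAt_of_integrable hderiv (integrable_pow_mul_gauss hb 1) hF

lemma gauss2 {b : ℝ} (hb : 0 < b) :
    ∫ x : ℝ, x ^ 2 * Real.exp (-b * x ^ 2) = (1 / (2*b)) * Real.sqrt (Real.pi / b) := by
  have := gauss_rec hb 0
  rw [gauss0 hb] at this
  simpa using this

lemma gauss3 {b : ℝ} (hb : 0 < b) : ∫ x : ℝ, x ^ 3 * Real.exp (-b * x ^ 2) = 0 := by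
  have := gauss_rec hb 1
  rw [gauss1 hb] at this
  simpa using this

lemma gauss4 {b : ℝ} (hb : 0 < b) :
    ∫ x : ℝ, x ^ 4 * Real.exp (-b * x ^ 2)
      = (3 / (2*b)) * ((1 / (2*b)) * Real.sqrt (Real.pi / b)) := by
  have := gauss_rec hb 2
  rw [gauss2 hb] at this
  rw [this]
  norm_num

lemma gaussianReal_centered (μ0 : ℝ) {v : ℝ} (hv : 0 < v) (k : ℕ) :
    ∫ x, (x - μ0) ^ k ∂(ProbabilityTheory.gaussianReal μ0 v.toNNReal)
      = (Real.sqrt (2 * Real.pi * v))⁻¹ * ∫ y : ℝ, y ^ k * Real.exp (-(2*v)⁻¹ * y ^ 2) := by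
  have hvne : v.toNNReal ≠ 0 := by
    simp [Real.toNNReal_eq_zero, not_le, hv]
  rw [ProbabilityTheory.gaussianReal_of_var_ne_zero _ hvne, ProbabilityTheory.gaussianPDF_def]
  have hmeas : Measurable fun x => (ProbabilityTheory.gaussianPDFReal μ0 v.toNNReal x).toNNReal :=
    (ProbabilityTheory.measurable_gaussianPDFReal μ0 v.toNNReal).real_toNNReal
  rw [show (fun x => ENNReal.ofReal (ProbabilityTheory.gaussianPDFReal μ0 v.toNNReal x))
      = (fun x => ((ProbabilityTheory.gaussianPDFReal μ0 v.toNNReal x).toNNReal : ℝ≥0∞)) from rfl,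
    integral_withDensity_eq_integral_smul hmeas]
  have hcv : ((v.toNNReal : ℝ)) = v := Real.coe_toNNReal v hv.le
  have hstep : (fun x => (ProbabilityTheory.gaussianPDFReal μ0 v.toNNReal x).toNNReal • (x - μ0) ^ k)
      = fun x => ((Real.sqrt (2 * Real.pi * v))⁻¹ * ((x - μ0) ^ k * Real.exp (-(2*v)⁻¹ * (x - μ0) ^ 2))) := by
    funext x
    rw [NNReal.smul_def, Real.coe_toNNReal _ (ProbabilityTheory.gaussianPDFReal_nonneg μ0 v.toNNReal x)]
    rw [ProbabilityTheory.gaussianPDFReal, hcv]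
    rw [smul_eq_mul]
    rw [show -(x - μ0) ^ 2 / (2 * v) = -(2*v)⁻¹ * (x - μ0) ^ 2 by field_simp]
    ring
  rw [hstep, integral_const_mul]
  congr 1
  exact integral_sub_right_eq_self (fun y => y ^ k * Real.exp (-(2*v)⁻¹ * y ^ 2)) μ0

variable {v : ℝ}

lemma gm_integrable (μ0 : ℝ) (hv : 0 < v) (k : ℕ) :
    Integrable (fun x => (x - μ0) ^ k) (ProbabilityTheory.gaussianReal μ0 v.toNNReal) := by
  have hvne : v.toNNReal ≠ 0 := by simp [Real.toNNReal_eq_zero, not_le, hv]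
  have hb : (0:ℝ) < (2*v)⁻¹ := by positivity
  rw [ProbabilityTheory.gaussianReal_of_var_ne_zero _ hvne, ProbabilityTheory.gaussianPDF_def]
  have hmeas : Measurable fun x => (ProbabilityTheory.gaussianPDFReal μ0 v.toNNReal x).toNNReal :=
    (ProbabilityTheory.measurable_gaussianPDFReal μ0 v.toNNReal).real_toNNReal
  rw [show (fun x => ENNReal.ofReal (ProbabilityTheory.gaussianPDFReal μ0 v.toNNReal x))
      = (fun x => ((ProbabilityTheory.gaussianPDFReal μ0 v.toNNReal x).toNNReal : ℝ≥0∞)) from rfl]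
  rw [integrable_withDensity_iff_integrable_smul hmeas]
  have hcv : ((v.toNNReal : ℝ)) = v := Real.coe_toNNReal v hv.le
  have : (fun x => (ProbabilityTheory.gaussianPDFReal μ0 v.toNNReal x).toNNReal • (x - μ0) ^ k)
      = fun x => (Real.sqrt (2 * Real.pi * v))⁻¹ * ((x - μ0) ^ k * Real.exp (-(2*v)⁻¹ * (x - μ0) ^ 2)) := by
    funext x
    rw [NNReal.smul_def, Real.coe_toNNReal _ (ProbabilityTheory.gaussianPDFReal_nonneg μ0 v.toNNReal x),
      ProbabilityTheory.gaussianPDFReal, hcv, smul_eq_mul,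
      show -(x - μ0) ^ 2 / (2 * v) = -(2*v)⁻¹ * (x - μ0) ^ 2 by field_simp]
    ring
  rw [this]
  exact ((integrable_pow_mul_gauss hb k).comp_sub_right μ0).const_mul _

lemma sqrt_eq (hv : 0 < v) : Real.sqrt (Real.pi / ((2*v)⁻¹)) = Real.sqrt (2 * Real.pi * v) := by
  congr 1
  field_simp

lemma gm0 (μ0 : ℝ) (hv : 0 < v) :
    ∫ x, (x - μ0) ^ 0 ∂(ProbabilityTheory.gaussianReal μ0 v.toNNReal) = 1 := by
  have hb : (0:ℝ) < (2*v)⁻¹ := by positivity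
  rw [gaussianReal_centered μ0 hv 0, gauss0 hb, sqrt_eq hv,
    inv_mul_cancel₀ (by positivity : Real.sqrt (2 * Real.pi * v) ≠ 0)]

lemma gm1 (μ0 : ℝ) (hv : 0 < v) :
    ∫ x, (x - μ0) ^ 1 ∂(ProbabilityTheory.gaussianReal μ0 v.toNNReal) = 0 := by
  have hb : (0:ℝ) < (2*v)⁻¹ := by positivity
  rw [gaussianReal_centered μ0 hv 1, gauss1 hb, mul_zero]

lemma gm2 (μ0 : ℝ) (hv : 0 < v) :
    ∫ x, (x - μ0) ^ 2 ∂(ProbabilityTheory.gaussianReal μ0 v.toNNReal) = v := by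
  have hb : (0:ℝ) < (2*v)⁻¹ := by positivity
  rw [gaussianReal_centered μ0 hv 2, gauss2 hb, sqrt_eq hv]
  have h1 : (1 / (2 * (2*v)⁻¹)) = v := by field_simp
  rw [h1, ← mul_assoc, mul_comm _ v, mul_assoc,
    inv_mul_cancel₀ (by positivity : Real.sqrt (2 * Real.pi * v) ≠ 0)]
  · ring
  
lemma gm3 (μ0 : ℝ) (hv : 0 < v) :
    ∫ x, (x - μ0) ^ 3 ∂(ProbabilityTheory.gaussianReal μ0 v.toNNReal) = 0 := by
  have hb : (0:ℝ) < (2*v)⁻¹ := by positivity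
  rw [gaussianReal_centered μ0 hv 3, gauss3 hb, mul_zero]

lemma gm4 (μ0 : ℝ) (hv : 0 < v) :
    ∫ x, (x - μ0) ^ 4 ∂(ProbabilityTheory.gaussianReal μ0 v.toNNReal) = 3 * v ^ 2 := by
  have hb : (0:ℝ) < (2*v)⁻¹ := by positivity
  rw [gaussianReal_centered μ0 hv 4, gauss4 hb, sqrt_eq hv]
  have h1 : (1 / (2 * (2*v)⁻¹)) = v := by field_simp
  have h2 : (3 / (2 * (2*v)⁻¹)) = 3 * v := by field_simp
  rw [h1, h2]
  have hs : (Real.sqrt (2 * Real.pi * v))⁻¹ * Real.sqrt (2 * Real.pi * v) = 1 :=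
    inv_mul_cancel₀ (by positivity)
  calc (Real.sqrt (2 * Real.pi * v))⁻¹ * (3 * v * (v * Real.sqrt (2 * Real.pi * v)))
      = 3 * v ^ 2 * ((Real.sqrt (2 * Real.pi * v))⁻¹ * Real.sqrt (2 * Real.pi * v)) := by ring
    _ = 3 * v ^ 2 := by rw [hs, mul_one]

lemma gint_s15 (μ0 : ℝ) (hv : 0 < v) (c0 c1 c2 c3 c4 : ℝ) :
    ∫ x, (c0 + c1 * (x - μ0) + c2 * (x - μ0) ^ 2 + c3 * (x - μ0) ^ 3 + c4 * (x - μ0) ^ 4)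
        ∂(ProbabilityTheory.gaussianReal μ0 v.toNNReal)
      = c0 + c2 * v + c4 * (3 * v ^ 2) := by
  set M := ProbabilityTheory.gaussianReal μ0 v.toNNReal
  have i0 : Integrable (fun _ : ℝ => c0) M := integrable_const _
  have i1 : Integrable (fun x => c1 * (x - μ0)) M := by
    simpa [pow_one] using (gm_integrable μ0 hv 1).const_mul c1
  have i2 : Integrable (fun x => c2 * (x - μ0) ^ 2) M := (gm_integrable μ0 hv 2).const_mul c2
  have i3 : Integrable (fun x => c3 * (x - μ0) ^ 3) M := (gm_integrable μ0 hv 3).const_mul c3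
  have i4 : Integrable (fun x => c4 * (x - μ0) ^ 4) M := (gm_integrable μ0 hv 4).const_mul c4
  have i01 : Integrable (fun x => c0 + c1 * (x - μ0)) M := by
    simpa using i0.add i1
  have i012 : Integrable (fun x => c0 + c1 * (x - μ0) + c2 * (x - μ0) ^ 2) M := by
    exact i01.add i2
  have i0123 : Integrable
      (fun x => c0 + c1 * (x - μ0) + c2 * (x - μ0) ^ 2 + c3 * (x - μ0) ^ 3) M := by
    exact i012.add i3
  rw [integral_add i0123 i4, integral_add i012 i3, integral_add i01 i2, integral_add i0 i1,
    integral_const_mul, integral_const_mul, integral_const_mul, integral_const_mul]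
  have e1 : ∫ x, (x - μ0) ∂M = 0 := by simpa [pow_one] using gm1 μ0 hv
  rw [e1, gm2 μ0 hv, gm3 μ0 hv, gm4 μ0 hv, integral_const]
  simp [M]


lemma gz1 (hv : 0 < v) : ∫ z, z ∂(ProbabilityTheory.gaussianReal 0 v.toNNReal) = 0 := by
  simpa using gm1 0 hv

lemma gz2 (hv : 0 < v) : ∫ z, z ^ 2 ∂(ProbabilityTheory.gaussianReal 0 v.toNNReal) = v := by
  simpa using gm2 0 hv

lemma gz3 (hv : 0 < v) : ∫ z, z ^ 3 ∂(ProbabilityTheory.gaussianReal 0 v.toNNReal) = 0 := by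
  simpa using gm3 0 hv

lemma gz4 (hv : 0 < v) : ∫ z, z ^ 4 ∂(ProbabilityTheory.gaussianReal 0 v.toNNReal) = 3 * v ^ 2 := by
  simpa using gm4 0 hv

noncomputable def L (x m w : ℝ) : ℝ :=
  Real.log ((Real.sqrt (2 * Real.pi * w))⁻¹ * Real.exp (-(x - m) ^ 2 / (2 * w)))

lemma L_eq {w : ℝ} (hw : 0 < w) (x m : ℝ) :
    L x m w = -(Real.log (2 * Real.pi * w) / 2) - (x - m) ^ 2 / (2 * w) := by
  have h2 : (0:ℝ) < 2 * Real.pi * w := by positivity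
  rw [L, Real.log_mul (by positivity) (Real.exp_ne_zero _), Real.log_inv, Real.log_exp,
    Real.log_sqrt h2.le]
  ring

lemma deriv_congr_pos {f g : ℝ → ℝ} {w0 : ℝ} (hw : 0 < w0) (h : ∀ w, 0 < w → f w = g w) :
    deriv f w0 = deriv g w0 := by
  apply Filter.EventuallyEq.deriv_eq
  filter_upwards [eventually_gt_nhds hw] with w hw' using h w hw'

-- derivative in m
lemma hasDerivAt_L_m {w : ℝ} (hw : 0 < w) (x m : ℝ) :
    HasDerivAt (fun m' => L x m' w) ((x - m) / w) m := by
  have : (fun m' => L x m' w)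
      = fun m' => -(Real.log (2 * Real.pi * w) / 2) - (x - m') ^ 2 / (2 * w) := by
    funext m'; exact L_eq hw x m'
  rw [this]
  have h1 : HasDerivAt (fun m' : ℝ => (x - m') ^ 2) (2 * (x - m) ^ 1 * (-1)) m :=
    (((hasDerivAt_id m).const_sub x)).pow 2
  have := ((h1.div_const (2 * w)).const_sub (-(Real.log (2 * Real.pi * w) / 2)))
  refine this.congr_deriv ?_
  field_simp

lemma deriv_L_m {w : ℝ} (hw : 0 < w) (x : ℝ) :
    (fun m => deriv (fun m' => L x m' w) m) = fun m => (x - m) / w := by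
  funext m; exact (hasDerivAt_L_m hw x m).deriv

lemma deriv2_L_m {w : ℝ} (hw : 0 < w) (x m : ℝ) :
    deriv (fun m1 => deriv (fun m2 => L x m2 w) m1) m = -(1 / w) := by
  have : (fun m1 => deriv (fun m2 => L x m2 w) m1) = fun m1 => (x - m1) / w :=
    deriv_L_m hw x
  rw [this]
  have h1 : HasDerivAt (fun m1 : ℝ => (x - m1) / w) (-1 / w) m :=
    ((hasDerivAt_id m).const_sub x).div_const w
  rw [h1.deriv]; ring

-- derivative in w
lemma hasDerivAt_L_w {w : ℝ} (hw : 0 < w) (x m : ℝ) :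
    HasDerivAt (fun w' => L x m w') (-(1 / (2 * w)) + (x - m) ^ 2 / (2 * w ^ 2)) w := by
  have hev : ∀ᶠ w' in 𝓝 w, L x m w'
      = -(Real.log (2 * Real.pi * w') / 2) - (x - m) ^ 2 / (2 * w') := by
    filter_upwards [eventually_gt_nhds hw] with w' hw' using L_eq hw' x m
  have h1 : HasDerivAt (fun w' : ℝ => -(Real.log (2 * Real.pi * w') / 2) - (x - m) ^ 2 / (2 * w'))
      (-(1 / (2 * w)) + (x - m) ^ 2 / (2 * w ^ 2)) w := by
    have hlog : HasDerivAt (fun w' : ℝ => Real.log (2 * Real.pi * w')) ((2 * Real.pi) / (2 * Real.pi * w)) w := by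
      have hlin : HasDerivAt (fun w' : ℝ => 2 * Real.pi * w') (2 * Real.pi) w := by
        simpa using (hasDerivAt_id w).const_mul (2 * Real.pi)
      exact (Real.hasDerivAt_log (by positivity)).comp w hlin |>.congr_deriv (by ring)
    have hinv : HasDerivAt (fun w' : ℝ => (2 * w')⁻¹) (-2 / (2 * w) ^ 2) w := by
      have hlin : HasDerivAt (fun w' : ℝ => 2 * w') (2:ℝ) w := by
        simpa using (hasDerivAt_id w).const_mul (2:ℝ)
      exact hlin.inv (by positivity)
    have h2 : HasDerivAt (fun w' : ℝ => (x - m) ^ 2 / (2 * w'))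
        ((x - m) ^ 2 * (-2 / (2 * w) ^ 2)) w := by
      simpa [div_eq_mul_inv] using hinv.const_mul ((x - m) ^ 2)
    have := ((hlog.div_const 2).neg).sub h2
    refine this.congr_deriv ?_
    have hw' : w ≠ 0 := ne_of_gt hw
    have hpi : Real.pi ≠ 0 := Real.pi_ne_zero
    field_simp
    ring
  exact h1.congr_of_eventuallyEq hev

lemma dLm {w : ℝ} (hw : 0 < w) (x m : ℝ) :
    deriv (fun m' => L x m' w) m = (x - m) / w := (hasDerivAt_L_m hw x m).deriv

lemma dLw {w : ℝ} (hw : 0 < w) (x m : ℝ) :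
    deriv (fun w' => L x m w') w = -(1 / (2 * w)) + (x - m) ^ 2 / (2 * w ^ 2) :=
  (hasDerivAt_L_w hw x m).deriv

lemma hasDerivAt_gw {w : ℝ} (hw : 0 < w) (x m : ℝ) :
    HasDerivAt (fun w' => -(1 / (2 * w')) + (x - m) ^ 2 / (2 * w' ^ 2))
      (1 / (2 * w ^ 2) - (x - m) ^ 2 / w ^ 3) w := by
  have hlin : HasDerivAt (fun w' : ℝ => 2 * w') (2:ℝ) w := by
    simpa using (hasDerivAt_id w).const_mul (2:ℝ)
  have h1 : HasDerivAt (fun w' : ℝ => (2 * w')⁻¹) (-2 / (2 * w) ^ 2) w :=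
    hlin.inv (by positivity)
  have hsq : HasDerivAt (fun w' : ℝ => 2 * w' ^ 2) (2 * (2 * w ^ 1)) w := by
    simpa using (hasDerivAt_pow 2 w).const_mul (2:ℝ)
  have h2 : HasDerivAt (fun w' : ℝ => (2 * w' ^ 2)⁻¹) (-(2 * (2 * w ^ 1)) / (2 * w ^ 2) ^ 2) w :=
    hsq.inv (by positivity)
  have h3 : HasDerivAt (fun w' : ℝ => (x - m) ^ 2 * (2 * w' ^ 2)⁻¹)
      ((x - m) ^ 2 * (-(2 * (2 * w ^ 1)) / (2 * w ^ 2) ^ 2)) w := h2.const_mul _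
  have := (h1.neg).add h3
  refine (this.congr_deriv ?_).congr_of_eventuallyEq (Filter.EventuallyEq.of_eq ?_)
  · have hw' : w ≠ 0 := ne_of_gt hw
    field_simp
    ring
  · funext w'; rw [one_div, div_eq_mul_inv]; rfl

lemma hasDerivAt_gww {w : ℝ} (hw : 0 < w) (x m : ℝ) :
    HasDerivAt (fun w' => 1 / (2 * w' ^ 2) - (x - m) ^ 2 / w' ^ 3)
      (-(1 / w ^ 3) + 3 * (x - m) ^ 2 / w ^ 4) w := by
  have hsq : HasDerivAt (fun w' : ℝ => 2 * w' ^ 2) (2 * (2 * w ^ 1)) w := by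
    simpa using (hasDerivAt_pow 2 w).const_mul (2:ℝ)
  have h2 : HasDerivAt (fun w' : ℝ => (2 * w' ^ 2)⁻¹) (-(2 * (2 * w ^ 1)) / (2 * w ^ 2) ^ 2) w :=
    hsq.inv (by positivity)
  have hcube : HasDerivAt (fun w' : ℝ => w' ^ 3) (3 * w ^ 2) w := by
    simpa using hasDerivAt_pow 3 w
  have h3 : HasDerivAt (fun w' : ℝ => (w' ^ 3)⁻¹) (-(3 * w ^ 2) / (w ^ 3) ^ 2) w :=
    hcube.inv (by positivity)
  have h4 : HasDerivAt (fun w' : ℝ => (x - m) ^ 2 * (w' ^ 3)⁻¹)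
      ((x - m) ^ 2 * (-(3 * w ^ 2) / (w ^ 3) ^ 2)) w := h3.const_mul _
  have := h2.sub h4
  refine (this.congr_deriv ?_).congr_of_eventuallyEq (Filter.EventuallyEq.of_eq ?_)
  · have hw' : w ≠ 0 := ne_of_gt hw
    field_simp
    ring
  · funext w'; rw [one_div, div_eq_mul_inv]; rfl

lemma e30_eq {v : ℝ} (hv : 0 < v) (x μ : ℝ) :
    deriv (fun m1 => deriv (fun m2 => deriv (fun m3 => L x m3 v) m2) m1) μ = 0 := by
  have h1 : (fun m1 => deriv (fun m2 => deriv (fun m3 => L x m3 v) m2) m1)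
      = fun m1 => -(1 / v) := by
    funext m1
    exact deriv2_L_m hv x m1
  rw [h1, deriv_const]

lemma e21_eq {v : ℝ} (hv : 0 < v) (x μ : ℝ) :
    deriv (fun w => deriv (fun m1 => deriv (fun m2 => L x m2 w) m1) μ) v = 1 / v ^ 2 := by
  rw [deriv_congr_pos hv (g := fun w => -(1 / w))
    (fun w hw => deriv2_L_m hw x μ)]
  have hinv : HasDerivAt (fun w : ℝ => w⁻¹) (-(v ^ 2)⁻¹) v := hasDerivAt_inv (ne_of_gt hv)
  have : HasDerivAt (fun w : ℝ => -w⁻¹) (-(-(v ^ 2)⁻¹)) v := hinv.neg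
  rw [show (fun w : ℝ => -(1 / w)) = fun w : ℝ => -w⁻¹ by funext w; rw [one_div], this.deriv]
  rw [neg_neg, one_div]

lemma e12_eq {v : ℝ} (hv : 0 < v) (x μ : ℝ) :
    deriv (fun m => deriv (fun w1 => deriv (fun w2 => L x m w2) w1) v) μ
      = 2 * (x - μ) / v ^ 3 := by
  have h1 : (fun m => deriv (fun w1 => deriv (fun w2 => L x m w2) w1) v)
      = fun m => 1 / (2 * v ^ 2) - (x - m) ^ 2 / v ^ 3 := by
    funext m
    rw [deriv_congr_pos hv (g := fun w1 => -(1 / (2 * w1)) + (x - m) ^ 2 / (2 * w1 ^ 2))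
      (fun w hw => dLw hw x m)]
    exact (hasDerivAt_gw hv x m).deriv
  rw [h1]
  have h2 : HasDerivAt (fun m : ℝ => (x - m) ^ 2) (2 * (x - μ) ^ 1 * (-1)) μ :=
    ((hasDerivAt_id μ).const_sub x).pow 2
  have h3 : HasDerivAt (fun m : ℝ => 1 / (2 * v ^ 2) - (x - m) ^ 2 / v ^ 3)
      (-(2 * (x - μ) ^ 1 * (-1) / v ^ 3)) μ := (h2.div_const _).const_sub _
  rw [h3.deriv]
  ring

lemma e03_eq {v : ℝ} (hv : 0 < v) (x μ : ℝ) :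
    deriv (fun w1 => deriv (fun w2 => deriv (fun w3 => L x μ w3) w2) w1) v
      = -(1 / v ^ 3) + 3 * (x - μ) ^ 2 / v ^ 4 := by
  rw [deriv_congr_pos hv (g := fun w1 => 1 / (2 * w1 ^ 2) - (x - μ) ^ 2 / w1 ^ 3)
    (fun w hw => by
      rw [deriv_congr_pos hw (g := fun w2 => -(1 / (2 * w2)) + (x - μ) ^ 2 / (2 * w2 ^ 2))
        (fun w' hw' => dLw hw' x μ)]
      exact (hasDerivAt_gw hw x μ).deriv)]
  exact (hasDerivAt_gww hv x μ).deriv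

end Aux


/-- **Example 2: the second-order expansion matching prior for the normal model
`N(μ, v)` is `π(μ, v) ∝ v^{−5/2}`.** -/
theorem normal_second_order_matching_prior
    (μ v : ℝ) (hv : 0 < v)
    -- the log-density of `N(μ', v')`
    (lf : ℝ → ℝ → ℝ → ℝ)
    (hlf : ∀ x' μ' v', lf x' μ' v' =
      Real.log ((Real.sqrt (2 * Real.pi * v'))⁻¹ * Real.exp (-(x' - μ') ^ 2 / (2 * v'))))
    -- the data distribution and the Fisher information in the parametrization `(μ, v)`
    (G : Measure ℝ) (hG : G = ProbabilityTheory.gaussianReal μ v.toNNReal)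
    (Fisher : Matrix (Fin 2) (Fin 2) ℝ)
    (hFisher : Fisher =
      !![∫ x', (deriv (fun m => lf x' m v) μ) ^ 2 ∂G,
          ∫ x', deriv (fun m => lf x' m v) μ * deriv (fun w => lf x' μ w) v ∂G;
        ∫ x', deriv (fun w => lf x' μ w) v * deriv (fun m => lf x' m v) μ ∂G,
          ∫ x', (deriv (fun w => lf x' μ w) v) ^ 2 ∂G])
    -- the third-order `ℰ_i`'s
    (E30 E21 E12 E03 : ℝ)
    (hE30 : E30 =
      ∫ x', deriv (fun m1 => deriv (fun m2 => deriv (fun m3 => lf x' m3 v) m2) m1) μ ∂G)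
    (hE21 : E21 =
      ∫ x', deriv (fun w => deriv (fun m1 => deriv (fun m2 => lf x' m2 w) m1) μ) v ∂G)
    (hE12 : E12 =
      ∫ x', deriv (fun m => deriv (fun w1 => deriv (fun w2 => lf x' m w2) w1) v) μ ∂G)
    (hE03 : E03 =
      ∫ x', deriv (fun w1 => deriv (fun w2 => deriv (fun w3 => lf x' μ w3) w2) w1) v ∂G)
    -- `Z = (Z₁, Z₂) ~ N(0, diag(v, 2v²))` and the vectors `Ψ_i` (with `a = (2,2)`)
    (G1 G2 : Measure ℝ)
    (hG1 : G1 = ProbabilityTheory.gaussianReal 0 v.toNNReal)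
    (hG2 : G2 = ProbabilityTheory.gaussianReal 0 (2 * v ^ 2).toNNReal)
    (Ψ30 Ψ21 Ψ12 Ψ03 : Fin 2 → ℝ)
    (hΨ30 : Ψ30 = ![∫ z1, (∫ z2, z1 ^ 4 ∂G2) ∂G1, ∫ z1, (∫ z2, z1 ^ 3 * z2 ∂G2) ∂G1])
    (hΨ21 : Ψ21 = ![∫ z1, (∫ z2, z1 ^ 3 * z2 ∂G2) ∂G1,
      ∫ z1, (∫ z2, z1 ^ 2 * z2 ^ 2 ∂G2) ∂G1])
    (hΨ12 : Ψ12 = ![∫ z1, (∫ z2, z1 ^ 2 * z2 ^ 2 ∂G2) ∂G1,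
      ∫ z1, (∫ z2, z1 * z2 ^ 3 ∂G2) ∂G1])
    (hΨ03 : Ψ03 = ![∫ z1, (∫ z2, z1 * z2 ^ 3 ∂G2) ∂G1, ∫ z1, (∫ z2, z2 ^ 4 ∂G2) ∂G1]) :
    -- the inverse Fisher information is `diag(v, 2v²)`
    Fisher⁻¹ = !![v, 0; 0, 2 * v ^ 2] ∧
    -- `ℰ_{(3,0)} = ℰ_{(1,2)} = 0`, `ℰ_{(2,1)} = 1/v²`, `ℰ_{(0,3)} = 2/v³`
    (E30 = 0 ∧ E21 = 1 / v ^ 2 ∧ E12 = 0 ∧ E03 = 2 / v ^ 3) ∧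
    -- `Ψ_{(2,1)} = (0, 2v³)` and `Ψ_{(0,3)} = (0, 12v⁴)`
    (Ψ21 = ![0, 2 * v ^ 3] ∧ Ψ03 = ![0, 12 * v ^ 4]) ∧
    -- `−{σ(a)}⁻¹ Σ_{|i|=3} (ℰ_i/i!) Ψ_i = (0, −5/(2v))`, with `{σ(a)} = diag(v, 2v²)`
    (-(!![v, 0; 0, 2 * v ^ 2] : Matrix (Fin 2) (Fin 2) ℝ)⁻¹.mulVec
        ((E30 / 6) • Ψ30 + (E21 / 2) • Ψ21 + (E12 / 2) • Ψ12 + (E03 / 6) • Ψ03)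
      = ![0, -5 / (2 * v)]) ∧
    -- the prior `π(μ, v) = v^{−5/2}` satisfies the matching equation
    -- `∇ log π(μ, v) = (0, −5/(2v))`
    (deriv (fun _ : ℝ => Real.log (v ^ (-(5 : ℝ) / 2))) μ = 0 ∧
      deriv (fun w : ℝ => Real.log (w ^ (-(5 : ℝ) / 2))) v = -5 / (2 * v)) := by
  -- identify `lf` with the closed-form `L`
  have hlfL : lf = L := by
    funext a b c; rw [hlf]; rfl
  subst hlfL
  subst hG; subst hG1; subst hG2
  have hv2 : (0:ℝ) < 2 * v ^ 2 := by positivity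
  -- Fisher information entries
  have hF00 : ∫ x', (deriv (fun m => L x' m v) μ) ^ 2
      ∂(ProbabilityTheory.gaussianReal μ v.toNNReal) = 1 / v := by
    have h : (fun x' => (deriv (fun m => L x' m v) μ) ^ 2)
        = fun x' => 0 + 0 * (x' - μ) + (v ^ 2)⁻¹ * (x' - μ) ^ 2
            + 0 * (x' - μ) ^ 3 + 0 * (x' - μ) ^ 4 := by
      funext x'
      rw [dLm hv]
      field_simp
      ring
    rw [h, gint_s15 μ hv]
    field_simp
    ring
  have hF01 : ∫ x', deriv (fun m => L x' m v) μ * deriv (fun w => L x' μ w) v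
      ∂(ProbabilityTheory.gaussianReal μ v.toNNReal) = 0 := by
    have h : (fun x' => deriv (fun m => L x' m v) μ * deriv (fun w => L x' μ w) v)
        = fun x' => 0 + (-(2 * v ^ 2)⁻¹) * (x' - μ) + 0 * (x' - μ) ^ 2
            + (2 * v ^ 3)⁻¹ * (x' - μ) ^ 3 + 0 * (x' - μ) ^ 4 := by
      funext x'
      rw [dLm hv, dLw hv]
      field_simp
      ring
    rw [h, gint_s15 μ hv]
    ring
  have hF10 : ∫ x', deriv (fun w => L x' μ w) v * deriv (fun m => L x' m v) μ
      ∂(ProbabilityTheory.gaussianReal μ v.toNNReal) = 0 := by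
    rw [show (fun x' => deriv (fun w => L x' μ w) v * deriv (fun m => L x' m v) μ)
        = fun x' => deriv (fun m => L x' m v) μ * deriv (fun w => L x' μ w) v by
      funext x'; ring]
    exact hF01
  have hF11 : ∫ x', (deriv (fun w => L x' μ w) v) ^ 2
      ∂(ProbabilityTheory.gaussianReal μ v.toNNReal) = 1 / (2 * v ^ 2) := by
    have h : (fun x' => (deriv (fun w => L x' μ w) v) ^ 2)
        = fun x' => (4 * v ^ 2)⁻¹ + 0 * (x' - μ) + (-(2 * v ^ 3)⁻¹) * (x' - μ) ^ 2
            + 0 * (x' - μ) ^ 3 + (4 * v ^ 4)⁻¹ * (x' - μ) ^ 4 := by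
      funext x'
      rw [dLw hv]
      field_simp
      ring
    rw [h, gint_s15 μ hv]
    field_simp
    ring
  have hFval : Fisher = !![1 / v, 0; 0, 1 / (2 * v ^ 2)] := by
    rw [hFisher, hF00, hF01, hF10, hF11]
  -- the E values
  have hE30' : E30 = 0 := by
    rw [hE30]
    rw [show (fun x' => deriv
        (fun m1 => deriv (fun m2 => deriv (fun m3 => L x' m3 v) m2) m1) μ)
      = fun _ : ℝ => (0:ℝ) by funext x'; exact e30_eq hv x' μ]
    exact integral_zero _ _
  have hE21' : E21 = 1 / v ^ 2 := by
    rw [hE21]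
    rw [show (fun x' => deriv
        (fun w => deriv (fun m1 => deriv (fun m2 => L x' m2 w) m1) μ) v)
      = fun _ : ℝ => 1 / v ^ 2 by funext x'; exact e21_eq hv x' μ]
    simp
  have hE12' : E12 = 0 := by
    rw [hE12]
    rw [show (fun x' => deriv
        (fun m => deriv (fun w1 => deriv (fun w2 => L x' m w2) w1) v) μ)
      = fun x' : ℝ => 0 + (2 / v ^ 3) * (x' - μ) + 0 * (x' - μ) ^ 2
          + 0 * (x' - μ) ^ 3 + 0 * (x' - μ) ^ 4 by
      funext x'; rw [e12_eq hv x' μ]; ring]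
    rw [gint_s15 μ hv]
    ring
  have hE03' : E03 = 2 / v ^ 3 := by
    rw [hE03]
    rw [show (fun x' => deriv
        (fun w1 => deriv (fun w2 => deriv (fun w3 => L x' μ w3) w2) w1) v)
      = fun x' : ℝ => (-(1 / v ^ 3)) + 0 * (x' - μ) + (3 / v ^ 4) * (x' - μ) ^ 2
          + 0 * (x' - μ) ^ 3 + 0 * (x' - μ) ^ 4 by
      funext x'; rw [e03_eq hv x' μ]; ring]
    rw [gint_s15 μ hv]
    field_simp
    ring
  -- the Ψ values
  have hΨzero : ∫ z1, (∫ z2, z1 ^ 3 * z2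
        ∂(ProbabilityTheory.gaussianReal 0 (2 * v ^ 2).toNNReal))
      ∂(ProbabilityTheory.gaussianReal 0 v.toNNReal) = 0 := by
    have h : ∀ z1 : ℝ, (∫ z2, z1 ^ 3 * z2
        ∂(ProbabilityTheory.gaussianReal 0 (2 * v ^ 2).toNNReal)) = 0 := fun z1 => by
      rw [integral_const_mul, gz1 hv2, mul_zero]
    simp only [h, integral_zero]
  have hΨ21B : ∫ z1, (∫ z2, z1 ^ 2 * z2 ^ 2
        ∂(ProbabilityTheory.gaussianReal 0 (2 * v ^ 2).toNNReal))
      ∂(ProbabilityTheory.gaussianReal 0 v.toNNReal) = 2 * v ^ 3 := by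
    have h : ∀ z1 : ℝ, (∫ z2, z1 ^ 2 * z2 ^ 2
        ∂(ProbabilityTheory.gaussianReal 0 (2 * v ^ 2).toNNReal)) = z1 ^ 2 * (2 * v ^ 2) :=
      fun z1 => by rw [integral_const_mul, gz2 hv2]
    simp only [h]
    rw [integral_mul_const, gz2 hv]
    ring
  have hΨ03A : ∫ z1, (∫ z2, z1 * z2 ^ 3
        ∂(ProbabilityTheory.gaussianReal 0 (2 * v ^ 2).toNNReal))
      ∂(ProbabilityTheory.gaussianReal 0 v.toNNReal) = 0 := by
    have h : ∀ z1 : ℝ, (∫ z2, z1 * z2 ^ 3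
        ∂(ProbabilityTheory.gaussianReal 0 (2 * v ^ 2).toNNReal)) = 0 := fun z1 => by
      rw [integral_const_mul, gz3 hv2, mul_zero]
    simp only [h, integral_zero]
  have hΨ03B : ∫ z1, (∫ z2, z2 ^ 4
        ∂(ProbabilityTheory.gaussianReal 0 (2 * v ^ 2).toNNReal))
      ∂(ProbabilityTheory.gaussianReal 0 v.toNNReal) = 12 * v ^ 4 := by
    have h : (∫ z2, z2 ^ 4
        ∂(ProbabilityTheory.gaussianReal 0 (2 * v ^ 2).toNNReal)) = 12 * v ^ 4 := by
      rw [gz4 hv2]; ring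
    simp only [h]
    simp
  have hΨ21' : Ψ21 = ![0, 2 * v ^ 3] := by rw [hΨ21, hΨzero, hΨ21B]
  have hΨ03' : Ψ03 = ![0, 12 * v ^ 4] := by rw [hΨ03, hΨ03A, hΨ03B]
  -- the inverse of diag(v, 2v²)
  have hMinv : (!![v, 0; 0, 2 * v ^ 2] : Matrix (Fin 2) (Fin 2) ℝ)⁻¹
      = !![v⁻¹, 0; 0, (2 * v ^ 2)⁻¹] := by
    apply Matrix.inv_eq_right_inv
    ext i j
    fin_cases i <;> fin_cases j <;>
      simp [Matrix.mul_apply, Fin.sum_univ_two] <;> field_simp <;> ring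
  refine ⟨?_, ⟨hE30', hE21', hE12', hE03'⟩, ⟨hΨ21', hΨ03'⟩, ?_, ?_, ?_⟩
  · -- Fisher⁻¹
    rw [hFval]
    apply Matrix.inv_eq_right_inv
    ext i j
    fin_cases i <;> fin_cases j <;>
      simp [Matrix.mul_apply, Fin.sum_univ_two] <;> field_simp <;> ring
  · -- the matching vector
    rw [hE30', hE21', hE12', hE03', hΨ21', hΨ03', hMinv]
    funext i
    fin_cases i <;>
      simp [Matrix.mulVec, dotProduct, Fin.sum_univ_two] <;>
      field_simp <;> ring
  · exact deriv_const μ _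
  · have hev : (fun w : ℝ => Real.log (w ^ (-(5:ℝ) / 2)))
        =ᶠ[nhds v] fun w => (-(5:ℝ) / 2) * Real.log w := by
      filter_upwards [eventually_gt_nhds hv] with w hw
      rw [Real.log_rpow hw]
    rw [hev.deriv_eq]
    have hd : HasDerivAt (fun w : ℝ => (-(5:ℝ) / 2) * Real.log w)
        ((-(5:ℝ) / 2) * v⁻¹) v := (Real.hasDerivAt_log (ne_of_gt hv)).const_mul _
    rw [hd.deriv]
    field_simp
    try ring


end Paper
end
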